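/- Given the G₂ contraction identity φ_{ijk} φ^k{}_{ab} = g_{ia}g_{jb} - g_{ib}g_{ja} + ψ_{ijab}, for any 4-tensors of the form P_{ijab} = (1/2)R_{ijab} + T_{ia}T_{jb} (with R the Riemann tensor and T antisymmetric), the full contraction (∇^j T^{ik})(∇_i T_{jk}) equals ||∇T||² - (1/8)(R_{ijab}+2T_{ia}T_{jb})[(R^{ijab}+2T^{ia}T^{jb}) - (R^{ijba}+2T^{ib}T^{ja}) + (R^{ijmn}+2T^{im}T^{jn})ψ_{mn}{}^{ab}], provided ∇^j T^{ik} = ∇^i T^{jk} + ((1/2)R^{ij}{}_{ab} + T^i{}_a T^j{}_b)φ^{kab}. -/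

import Mathlib

/-!
Write `Q_{ijab} = R_{ijab} + 2 T_{ia} T_{jb}` and `A_{ijk} = Q_{ijab} φ_k{}^{ab}`, so that the
Bianchi-type identity reads `S_{jik} = S_{ijk} + A_{ijk} / 2`. `A` is antisymmetric in `(i, j)`:
`R` is, and the symmetrisation of `T_{ia} T_{jb}` in `(i, j)` is symmetric in `(a, b)`, so it is
killed by `φ`. Hence relabelling `i ↔ j` in `A_{ijk} S_{ijk}` gives
`S_{jik} S_{ijk} = |S|² - |A|² / 8`, and the `φφ` contraction identity evaluates
`|A|² = Q_{ijab} (Q^{ijab} - Q^{ijba} + Q^{ijmn} ψ_{mn}{}^{ab})`.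
-/

open Finset

section Antisymmetry

variable {ι K : Type*} [Fintype ι]

theorem sum_sum_eq_zero_of_antisymm [AddCommGroup K] [IsAddTorsionFree K] {h : ι → ι → K}
    (hh : ∀ a b, h a b = -h b a) : ∑ a, ∑ b, h a b = 0 :=
  self_eq_neg.mp <| calc
    ∑ a, ∑ b, h a b = ∑ a, ∑ b, -h b a := sum_congr rfl fun a _ => sum_congr rfl fun b _ => hh a b
    _ = -∑ a, ∑ b, h a b := by rw [sum_comm]; simp only [sum_neg_distrib]

theorem sum_mul_swap_eq_of_swap_eq_add_antisymm [Field K] [CharZero K] {S A : ι → ι → ι → K}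
    (c : K) (hA : ∀ i j k, A j i k = -A i j k) (hSA : ∀ i j k, S j i k = S i j k + c * A i j k) :
    ∑ i, ∑ j, ∑ k, S j i k * S i j k =
      ∑ i, ∑ j, ∑ k, S i j k * S i j k - c ^ 2 / 2 * ∑ i, ∑ j, ∑ k, A i j k * A i j k := by
  have hswap : ∑ i, ∑ j, ∑ k, S j i k * S i j k =
      ∑ i, ∑ j, ∑ k, (S i j k * S i j k + c * (A i j k * S i j k)) :=
    sum_congr rfl fun i _ => sum_congr rfl fun j _ => sum_congr rfl fun k _ => by
      rw [hSA]; ring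
  have hcross : ∑ i, ∑ j, ∑ k, A i j k * S i j k =
      -∑ i, ∑ j, ∑ k, (A i j k * S i j k + c * (A i j k * A i j k)) := by
    rw [sum_comm]
    simp only [← sum_neg_distrib]
    exact sum_congr rfl fun i _ => sum_congr rfl fun j _ => sum_congr rfl fun k _ => by
      rw [hA, hSA]; ring
  simp only [sum_add_distrib, ← mul_sum] at hswap hcross
  linear_combination hswap + (c / 2) * hcross

end Antisymmetry

section Contraction

variable {ι K : Type*} [Fintype ι] [DecidableEq ι] [CommRing K]

def ContractionIdentity (φ : ι → ι → ι → K) (ψ : ι → ι → ι → ι → K) : Prop :=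
  ∀ i j a b, ∑ k, φ i j k * φ k a b =
    (if i = a then (1 : K) else 0) * (if j = b then (1 : K) else 0)
      - (if i = b then (1 : K) else 0) * (if j = a then (1 : K) else 0)
      + ψ i j a b

variable {φ : ι → ι → ι → K} {ψ : ι → ι → ι → ι → K}

theorem ContractionIdentity.sum_mul_eq
    (hφψ : ContractionIdentity φ ψ)
    (hφ1 : ∀ i j k, φ i j k = -φ j i k) (hφ2 : ∀ i j k, φ i j k = -φ i k j) (a b c d : ι) :
    ∑ k, φ k a b * φ k c d =
      (if a = c then (1 : K) else 0) * (if b = d then (1 : K) else 0)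
        - (if a = d then (1 : K) else 0) * (if b = c then (1 : K) else 0)
        + ψ a b c d := by
  rw [← hφψ a b c d]
  exact sum_congr rfl fun k _ => by rw [hφ1, hφ2 a, neg_neg]

theorem ContractionIdentity.sum_mul_sum_sum_eq
    (hφψ : ContractionIdentity φ ψ)
    (hφ1 : ∀ i j k, φ i j k = -φ j i k) (hφ2 : ∀ i j k, φ i j k = -φ i k j)
    (hψ : ∀ a b m n, ψ a b m n = ψ m n a b) (Q : ι → ι → K) (a b : ι) :
    ∑ k, φ k a b * ∑ c, ∑ d, Q c d * φ k c d =
      Q a b - Q b a + ∑ c, ∑ d, Q c d * ψ c d a b := by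
  calc ∑ k, φ k a b * ∑ c, ∑ d, Q c d * φ k c d
      = ∑ c, ∑ d, Q c d * ∑ k, φ k a b * φ k c d := by
        simp only [mul_sum]
        rw [sum_comm]
        refine sum_congr rfl fun c _ => ?_
        rw [sum_comm]
        exact sum_congr rfl fun d _ => sum_congr rfl fun k _ => by ring
    _ = Q a b - Q b a + ∑ c, ∑ d, Q c d * ψ c d a b := by
        simp only [hφψ.sum_mul_eq hφ1 hφ2, hψ a b, mul_add, mul_sub, mul_ite,
          mul_one, mul_zero, sum_add_distrib, sum_sub_distrib, sum_ite_eq, sum_ite_irrel,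
          sum_const_zero, mem_univ, if_true]

theorem ContractionIdentity.sum_sq_sum_sum_eq
    (hφψ : ContractionIdentity φ ψ)
    (hφ1 : ∀ i j k, φ i j k = -φ j i k) (hφ2 : ∀ i j k, φ i j k = -φ i k j)
    (hψ : ∀ a b m n, ψ a b m n = ψ m n a b) (Q : ι → ι → K) :
    ∑ k, (∑ a, ∑ b, Q a b * φ k a b) * (∑ a, ∑ b, Q a b * φ k a b) =
      ∑ a, ∑ b, Q a b * (Q a b - Q b a + ∑ m, ∑ n, Q m n * ψ m n a b) := by
  calc ∑ k, (∑ a, ∑ b, Q a b * φ k a b) * (∑ a, ∑ b, Q a b * φ k a b)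
      = ∑ a, ∑ b, ∑ k, Q a b * (φ k a b * ∑ c, ∑ d, Q c d * φ k c d) := by
        simp only [sum_mul, mul_assoc]
        rw [sum_comm]
        exact sum_congr rfl fun a _ => sum_comm
    _ = _ := by simp only [← mul_sum, hφψ.sum_mul_sum_sum_eq hφ1 hφ2 hψ]

end Contraction

theorem statement10_general
    (R : Fin 7 → Fin 7 → Fin 7 → Fin 7 → ℝ)
    (T : Fin 7 → Fin 7 → ℝ)
    (S : Fin 7 → Fin 7 → Fin 7 → ℝ)
    (φ : Fin 7 → Fin 7 → Fin 7 → ℝ)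
    (ψ : Fin 7 → Fin 7 → Fin 7 → Fin 7 → ℝ)
    (hR1 : ∀ i j a b, R i j a b = -R j i a b)
    (hφ1 : ∀ i j k, φ i j k = -φ j i k)
    (hφ2 : ∀ i j k, φ i j k = -φ i k j)
    (hψpair : ∀ a b m n, ψ a b m n = ψ m n a b)
    (hφψ : ∀ i j a b, (∑ k, φ i j k * φ k a b) =
      (if i = a then (1 : ℝ) else 0) * (if j = b then (1 : ℝ) else 0)
        - (if i = b then (1 : ℝ) else 0) * (if j = a then (1 : ℝ) else 0)
        + ψ i j a b)
    (hBianchi : ∀ i j k, S j i k = S i j k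
        + ∑ a, ∑ b, ((1 / 2) * R i j a b + T i a * T j b) * φ k a b) :
    (∑ i, ∑ j, ∑ k, S j i k * S i j k) =
      (∑ i, ∑ j, ∑ k, S i j k * S i j k)
        - (1 / 8) * ∑ i, ∑ j, ∑ a, ∑ b,
            (R i j a b + 2 * T i a * T j b) *
              ((R i j a b + 2 * T i a * T j b)
                - (R i j b a + 2 * T i b * T j a)
                + ∑ m, ∑ n, (R i j m n + 2 * T i m * T j n) * ψ m n a b) := by
  have hSA : ∀ i j k, S j i k = S i j k
      + 1 / 2 * ∑ a, ∑ b, (R i j a b + 2 * T i a * T j b) * φ k a b := fun i j k => by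
    simp only [hBianchi i j k, mul_sum]
    exact congrArg _ <| sum_congr rfl fun a _ => sum_congr rfl fun b _ => by ring
  have hA : ∀ i j k, ∑ a, ∑ b, (R j i a b + 2 * T j a * T i b) * φ k a b
      = -∑ a, ∑ b, (R i j a b + 2 * T i a * T j b) * φ k a b := fun i j k => by
    refine eq_neg_of_add_eq_zero_left ?_
    simp only [← sum_add_distrib, ← add_mul]
    refine sum_sum_eq_zero_of_antisymm fun a b => ?_
    rw [hR1 j i a b, hR1 j i b a, hφ2 k a b]
    ring
  rw [sum_mul_swap_eq_of_swap_eq_add_antisymm _ hA hSA]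
  simp only [ContractionIdentity.sum_sq_sum_sum_eq hφψ hφ1 hφ2 hψpair]
  norm_num

/-- Given the G₂ contraction identity `φ_{ijk} φ^k{}_{ab} = g_{ia}g_{jb} - g_{ib}g_{ja}
+ ψ_{ijab}` on `ℝ⁷` and the Bianchi-type identity
`∇^j T^{ik} = ∇^i T^{jk} + ((1/2)R^{ij}{}_{ab} + T^i{}_a T^j{}_b)φ^{kab}`
(with `S_{ijk} := ∇_i T_{jk}`, `R` having the Riemann symmetries, `T` antisymmetric,
`φ` a 3-form and `ψ` a 4-form), the full contraction `(∇^j T^{ik})(∇_i T_{jk})` equals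
`‖∇T‖² - (1/8)(R_{ijab}+2T_{ia}T_{jb})[(R^{ijab}+2T^{ia}T^{jb})
- (R^{ijba}+2T^{ib}T^{ja}) + (R^{ijmn}+2T^{im}T^{jn})ψ_{mn}{}^{ab}]`. -/
theorem statement10
    (R : Fin 7 → Fin 7 → Fin 7 → Fin 7 → ℝ)
    (T : Fin 7 → Fin 7 → ℝ)
    (S : Fin 7 → Fin 7 → Fin 7 → ℝ)
    (φ : Fin 7 → Fin 7 → Fin 7 → ℝ)
    (ψ : Fin 7 → Fin 7 → Fin 7 → Fin 7 → ℝ)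
    (hR1 : ∀ i j a b, R i j a b = -R j i a b)
    (hR2 : ∀ i j a b, R i j a b = -R i j b a)
    (hRpair : ∀ i j a b, R i j a b = R a b i j)
    (hT : ∀ i j, T i j = -T j i)
    (hS : ∀ i j k, S i j k = -S i k j)
    (hφ1 : ∀ i j k, φ i j k = -φ j i k)
    (hφ2 : ∀ i j k, φ i j k = -φ i k j)
    (hψpair : ∀ a b m n, ψ a b m n = ψ m n a b)
    (hφψ : ∀ i j a b, (∑ k, φ i j k * φ k a b) =
      (if i = a then (1 : ℝ) else 0) * (if j = b then (1 : ℝ) else 0)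
        - (if i = b then (1 : ℝ) else 0) * (if j = a then (1 : ℝ) else 0)
        + ψ i j a b)
    (hBianchi : ∀ i j k, S j i k = S i j k
        + ∑ a, ∑ b, ((1 / 2) * R i j a b + T i a * T j b) * φ k a b) :
    (∑ i, ∑ j, ∑ k, S j i k * S i j k) =
      (∑ i, ∑ j, ∑ k, S i j k * S i j k)
        - (1 / 8) * ∑ i, ∑ j, ∑ a, ∑ b,
            (R i j a b + 2 * T i a * T j b) *
              ((R i j a b + 2 * T i a * T j b)
                - (R i j b a + 2 * T i b * T j a)
                + ∑ m, ∑ n, (R i j m n + 2 * T i m * T j n) * ψ m n a b) :=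
  statement10_general R T S φ ψ hR1 hφ1 hφ2 hψpair hφψ hBianchi
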